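/- arXiv:2208.09809 — 4 statements merged into one kernel-verified Lean document; each statement's English description precedes it below -/
import Mathlib

section
/- For every integer r ≥ 1 and every index i of the sequence A: rank(i) = r if and only if rank(i) ≥ r and A(i) ≤ A(j) holds for every index j < i with rank(j) ≥ r. In other words, i has rank r exactly when i remains and is a prefix-min index after removing all indices of rank smaller than r. -/
/-- `l` is a strictly increasing subsequence of `A` ending at index `i`. -/
def IsIncEndingAt {n : ℕ} {α : Type*} [LinearOrder α] (A : Fin n → α)
    (l : List (Fin n)) (i : Fin n) : Prop :=
  l.Chain' (· < ·) ∧ (l.map A).Chain' (· < ·) ∧ l.getLast? = some i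

/-- The rank of index `i`: the maximum length of an increasing subsequence of `A`
ending at `i`. -/
noncomputable def lisRank {n : ℕ} {α : Type*} [LinearOrder α] (A : Fin n → α)
    (i : Fin n) : ℕ :=
  sSup {m : ℕ | ∃ l : List (Fin n), IsIncEndingAt A l i ∧ l.length = m}

/-! An index `i` of rank `> r ≥ 1` has a predecessor `j < i` with `A j < A i` and rank `≥ r`,
so `i` is not a prefix-min among the indices of rank `≥ r`. Conversely, a `j < i` of rank
`≥ r` with `A j < A i` would push the rank of `i` above `r`. -/

section LisRank

variable {n : ℕ} {α : Type*} [LinearOrder α] {A : Fin n → α}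

theorem isIncEndingAt_singleton (i : Fin n) : IsIncEndingAt A [i] i :=
  ⟨List.isChain_singleton i, List.isChain_singleton _, rfl⟩

theorem isIncEndingAt_append_singleton_iff {l : List (Fin n)} {i j : Fin n}
    (hj : l.getLast? = some j) :
    IsIncEndingAt A (l ++ [i]) i ↔ IsIncEndingAt A l j ∧ j < i ∧ A j < A i := by
  simp only [IsIncEndingAt, List.Chain', List.map_append, List.isChain_append,
    List.getLast?_map, hj]
  simp [and_assoc, and_comm, and_left_comm]

theorem IsIncEndingAt.length_le {l : List (Fin n)} {i : Fin n} (hl : IsIncEndingAt A l i) :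
    l.length ≤ n := by
  have hnodup : l.Nodup := (List.isChain_iff_pairwise.mp hl.1).imp ne_of_lt
  simpa using hnodup.length_le_card

theorem bddAbove_lengths_isIncEndingAt (A : Fin n → α) (i : Fin n) :
    BddAbove {m : ℕ | ∃ l : List (Fin n), IsIncEndingAt A l i ∧ l.length = m} :=
  ⟨n, by rintro _ ⟨l, hl, rfl⟩; exact hl.length_le⟩

theorem IsIncEndingAt.length_le_lisRank {l : List (Fin n)} {i : Fin n}
    (hl : IsIncEndingAt A l i) : l.length ≤ lisRank A i :=
  le_csSup (bddAbove_lengths_isIncEndingAt A i) ⟨l, hl, rfl⟩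

theorem exists_isIncEndingAt_length_eq_lisRank (A : Fin n → α) (i : Fin n) :
    ∃ l : List (Fin n), IsIncEndingAt A l i ∧ l.length = lisRank A i :=
  show lisRank A i ∈ {m : ℕ | ∃ l : List (Fin n), IsIncEndingAt A l i ∧ l.length = m} from
  Nat.sSup_mem ⟨1, [i], isIncEndingAt_singleton i, rfl⟩ (bddAbove_lengths_isIncEndingAt A i)

theorem lisRank_lt_lisRank {i j : Fin n} (hji : j < i) (hA : A j < A i) :
    lisRank A j < lisRank A i := by
  obtain ⟨l, hl, hlen⟩ := exists_isIncEndingAt_length_eq_lisRank A j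
  have hext : IsIncEndingAt A (l ++ [i]) i :=
    (isIncEndingAt_append_singleton_iff hl.2.2).2 ⟨hl, hji, hA⟩
  simpa [hlen] using hext.length_le_lisRank

theorem exists_lt_lisRank_le_succ_of_two_le_lisRank {i : Fin n} (h : 2 ≤ lisRank A i) :
    ∃ j < i, A j < A i ∧ lisRank A i ≤ lisRank A j + 1 := by
  obtain ⟨l, hl, hlen⟩ := exists_isIncEndingAt_length_eq_lisRank A i
  have hne : l ≠ [] := by rintro rfl; simp at hlen; omega
  have hsplit : l = l.dropLast ++ [i] := by
    rw [← List.getLast_eq_iff_getLast?_eq_some hne |>.2 hl.2.2, List.dropLast_append_getLast]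
  have hne' : l.dropLast ≠ [] := by
    rw [← List.length_pos_iff, List.length_dropLast]; omega
  set j := l.dropLast.getLast hne'
  rw [hsplit, isIncEndingAt_append_singleton_iff (List.getLast?_eq_some_getLast hne')] at hl
  obtain ⟨hl', hji, hA⟩ := hl
  refine ⟨j, hji, hA, ?_⟩
  calc lisRank A i = l.dropLast.length + 1 := by rw [List.length_dropLast]; omega
    _ ≤ lisRank A j + 1 := by gcongr; exact hl'.length_le_lisRank

end LisRank

/-- For every `r ≥ 1`, an index `i` has rank exactly `r` iff `i` has rank at least
`r` and `A i ≤ A j` for every `j < i` whose rank is at least `r`; i.e. `i` remains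
and is a prefix-min index after removing all indices of rank smaller than `r`. -/
theorem lisRank_eq_iff_prefixMin_after_removal {n : ℕ} {α : Type*} [LinearOrder α]
    (A : Fin n → α) (r : ℕ) (hr : 1 ≤ r) (i : Fin n) :
    lisRank A i = r ↔
      (r ≤ lisRank A i ∧ ∀ j : Fin n, j < i → r ≤ lisRank A j → A i ≤ A j) := by
  constructor
  · rintro rfl
    refine ⟨le_rfl, fun j hji hrj => ?_⟩
    by_contra! hA
    exact (lisRank_lt_lisRank hji hA).not_ge hrj
  · rintro ⟨hri, hprefixMin⟩
    by_contra hne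
    obtain ⟨j, hji, hA, hij⟩ := exists_lt_lisRank_le_succ_of_two_le_lisRank
      (by omega : 2 ≤ lisRank A i)
    exact (hprefixMin j hji (by omega)).not_gt hA
end

section
/- Tournament-tree ancestor bound: let n = 2^h with h ≥ 0, and consider the complete binary tree whose nodes are the integers 1, …, 2n − 1, whose leaves are the integers n, …, 2n − 1, and in which the parent of node v > 1 is ⌊v/2⌋ (so the ancestors of a leaf s are the numbers ⌊s/2^t⌋ for 0 ≤ t ≤ h). For every nonempty set S of m leaves, the set of all ancestors of leaves in S, namely { ⌊s/2^t⌋ : s ∈ S, 0 ≤ t ≤ h }, has cardinality at most m · (3 + log₂(n/m)). -/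
/-- Tournament-tree ancestor bound: for `n = 2 ^ h`, in the complete binary tree
with nodes `1, …, 2n - 1`, leaves `n, …, 2n - 1`, and parent `v / 2`, the set of
ancestors `{ s / 2 ^ t : s ∈ S, 0 ≤ t ≤ h }` of a nonempty set `S` of `m` leaves
has cardinality at most `m * (3 + log₂ (n / m))`. -/
theorem tournament_tree_ancestor_bound (h n : ℕ) (hn : n = 2 ^ h)
    (S : Finset ℕ) (hS : ∀ s ∈ S, n ≤ s ∧ s ≤ 2 * n - 1) (hSne : S.Nonempty)
    (m : ℕ) (hm : m = S.card) :
    ((S.biUnion fun s => (Finset.range (h + 1)).image fun t => s / 2 ^ t).card : ℝ)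
      ≤ (m : ℝ) * (3 + Real.logb 2 ((n : ℝ) / (m : ℝ))) := by
  classical
  have hm1 : 1 ≤ m := by rw [hm]; exact hSne.card_pos
  -- m ≤ 2 ^ h
  have hmn : m ≤ 2 ^ h := by
    have hsub : S ⊆ Finset.Icc n (2 * n - 1) := by
      intro s hs; rw [Finset.mem_Icc]; exact hS s hs
    have := Finset.card_le_card hsub
    rw [Nat.card_Icc] at this
    have hn1 : 1 ≤ n := by rw [hn]; exact Nat.one_le_two_pow
    omega
  set k := Nat.log 2 m with hk
  have hk1 : 2 ^ k ≤ m := Nat.pow_log_le_self 2 (by omega)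
  have hk2 : m < 2 ^ (k + 1) := Nat.lt_pow_succ_log_self (by norm_num) m
  have hkh : k ≤ h := by
    by_contra hcon
    push_neg at hcon
    have : 2 ^ h < 2 ^ k := Nat.pow_lt_pow_right (by norm_num) hcon
    omega
  -- Step 1: cardinality bounded by sum over levels
  have hsub : (S.biUnion fun s => (Finset.range (h + 1)).image fun t => s / 2 ^ t)
      ⊆ (Finset.range (h + 1)).biUnion fun t => S.image (· / 2 ^ t) := by
    intro x hx
    simp only [Finset.mem_biUnion, Finset.mem_image, Finset.mem_range] at *
    obtain ⟨s, hs, t, ht, rfl⟩ := hx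
    exact ⟨t, ht, s, hs, rfl⟩
  have hcard : (S.biUnion fun s => (Finset.range (h + 1)).image fun t => s / 2 ^ t).card
      ≤ ∑ t ∈ Finset.range (h + 1), min m (2 ^ (h - t)) := by
    refine (Finset.card_le_card hsub).trans (Finset.card_biUnion_le.trans ?_)
    apply Finset.sum_le_sum
    intro t ht
    rw [Finset.mem_range, Nat.lt_succ_iff] at ht
    apply le_min
    · rw [hm]; exact Finset.card_image_le
    · have himg : S.image (· / 2 ^ t) ⊆ Finset.Ico (2 ^ (h - t)) (2 ^ (h - t) * 2) := by
        intro x hx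
        simp only [Finset.mem_image] at hx
        obtain ⟨s, hs, rfl⟩ := hx
        obtain ⟨h1, h2⟩ := hS s hs
        have hpow : 2 ^ (h - t) * 2 ^ t = 2 ^ h := by
          rw [← pow_add]; congr 1; omega
        rw [Finset.mem_Ico]
        constructor
        · rw [Nat.le_div_iff_mul_le (by positivity)]
          calc 2 ^ (h - t) * 2 ^ t = 2 ^ h := hpow
            _ ≤ s := hn ▸ h1
        · rw [Nat.div_lt_iff_lt_mul (by positivity)]
          have hs2 : s ≤ 2 * 2 ^ h - 1 := by omega
          have h2h : 1 ≤ 2 ^ h := Nat.one_le_two_pow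
          calc s ≤ 2 * 2 ^ h - 1 := hs2
            _ < 2 ^ h * 2 := by omega
            _ = 2 ^ (h - t) * 2 * 2 ^ t := by rw [mul_right_comm, hpow]
      calc (S.image (· / 2 ^ t)).card ≤ (Finset.Ico (2 ^ (h - t)) (2 ^ (h - t) * 2)).card :=
            Finset.card_le_card himg
        _ = 2 ^ (h - t) := by rw [Nat.card_Ico]; omega
  -- Step 2: bound the sum by m * (h - k + 2)
  have hrefl : ∑ t ∈ Finset.range (h + 1), min m (2 ^ (h - t))
      = ∑ j ∈ Finset.range (h + 1), min m (2 ^ j) := by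
    rw [← Finset.sum_range_reflect]
    apply Finset.sum_congr rfl
    intro j hj
    rw [Finset.mem_range, Nat.lt_succ_iff] at hj
    congr 2
    omega
  have geo : ∀ K, ∑ j ∈ Finset.range K, 2 ^ j = 2 ^ K - 1 := by
    intro K
    induction K with
    | zero => simp
    | succ K ih =>
      rw [Finset.sum_range_succ, ih]
      have h1 : 1 ≤ 2 ^ K := Nat.one_le_two_pow
      have h2 : 2 ^ (K + 1) = 2 * 2 ^ K := by ring
      omega
  have hsum : ∑ j ∈ Finset.range (h + 1), min m (2 ^ j) ≤ m * (h - k + 2) := by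
    have hsplit : Finset.range (h + 1) = Finset.range (k + 1) ∪ Finset.Ico (k + 1) (h + 1) := by
      ext x
      simp only [Finset.mem_range, Finset.mem_union, Finset.mem_Ico]
      omega
    rw [hsplit, Finset.sum_union (by
      rw [Finset.range_eq_Ico]
      exact Finset.Ico_disjoint_Ico_consecutive 0 (k + 1) (h + 1))]
    have hA : ∑ j ∈ Finset.range (k + 1), min m (2 ^ j) ≤ 2 * m - 1 := by
      calc ∑ j ∈ Finset.range (k + 1), min m (2 ^ j) ≤ ∑ j ∈ Finset.range (k + 1), 2 ^ j :=
            Finset.sum_le_sum fun j _ => min_le_right _ _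
        _ = 2 ^ (k + 1) - 1 := geo _
        _ ≤ 2 * m - 1 := by
            have : 2 ^ (k + 1) = 2 * 2 ^ k := by ring
            omega
    have hB : ∑ j ∈ Finset.Ico (k + 1) (h + 1), min m (2 ^ j) ≤ m * (h - k) := by
      calc ∑ j ∈ Finset.Ico (k + 1) (h + 1), min m (2 ^ j)
          ≤ ∑ _j ∈ Finset.Ico (k + 1) (h + 1), m :=
            Finset.sum_le_sum fun j _ => min_le_left _ _
        _ = m * (h - k) := by rw [Finset.sum_const, Nat.card_Ico, smul_eq_mul, mul_comm]; congr 1; omega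
    have hexp : m * (h - k + 2) = m * (h - k) + 2 * m := by ring
    omega
  -- Step 3: put together and cast to ℝ
  have hfinal : (S.biUnion fun s => (Finset.range (h + 1)).image fun t => s / 2 ^ t).card
      ≤ m * (h - k + 2) := by omega
  have hcast : ((S.biUnion fun s => (Finset.range (h + 1)).image fun t => s / 2 ^ t).card : ℝ)
      ≤ (m : ℝ) * ((h : ℝ) - (k : ℝ) + 2) := by
    calc ((S.biUnion fun s => (Finset.range (h + 1)).image fun t => s / 2 ^ t).card : ℝ)
        ≤ ((m * (h - k + 2) : ℕ) : ℝ) := by exact_mod_cast hfinal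
      _ = (m : ℝ) * ((h : ℝ) - (k : ℝ) + 2) := by
          push_cast [Nat.cast_sub hkh]
          ring
  refine hcast.trans ?_
  have hmpos : (0 : ℝ) < m := by exact_mod_cast hm1
  apply mul_le_mul_of_nonneg_left _ (le_of_lt hmpos)
  -- need h - k + 2 ≤ 3 + logb 2 (n / m)
  have hlogn : Real.logb 2 ((n : ℝ) / (m : ℝ)) = (h : ℝ) - Real.logb 2 (m : ℝ) := by
    rw [Real.logb_div (by rw [hn]; push_cast; positivity) (by positivity), hn]
    push_cast
    rw [Real.logb_pow, Real.logb_self_eq_one (by norm_num : (1:ℝ) < 2)]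
    ring
  have hlogm : Real.logb 2 (m : ℝ) ≤ (k : ℝ) + 1 := by
    have hle : (m : ℝ) ≤ (2 : ℝ) ^ (k + 1) := by exact_mod_cast hk2.le
    calc Real.logb 2 (m : ℝ) ≤ Real.logb 2 ((2 : ℝ) ^ (k + 1)) :=
          Real.logb_le_logb_of_le (by norm_num) (by positivity) hle
      _ = (k : ℝ) + 1 := by
          rw [Real.logb_pow, Real.logb_self_eq_one (by norm_num : (1:ℝ) < 2)]
          push_cast; ring
  rw [hlogn]
  linarith
end

section
/- Solution of the vEB batch-insertion work recurrence: let c ≥ 0 and let W : ℕ → ℕ → ℝ be any function such that (a) W(0, m) ≤ c·m for all m, (b) W(j, 0) ≤ 0 for all j, and (c) for all j and m there exists a finite family of natural numbers m₁, …, m_s with m₁ + ⋯ + m_s = m and W(j + 1, m) ≤ W(j, m₁) + ⋯ + W(j, m_s) + c·m. Then W(j, m) ≤ c·m·(j + 1) for all j and m. (Here j indexes the level of the recursion, corresponding to universe size u = 2^(2^j), so the bound is c·m·log log u.) -/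
/-- Solution of the vEB batch-insertion work recurrence: if `W 0 m ≤ c * m`,
`W j 0 ≤ 0`, and each `W (j+1) m` is bounded by a sum of `W j` over sub-batch
sizes summing to `m` plus `c * m`, then `W j m ≤ c * m * (j + 1)`. -/
theorem veb_batch_insert_work (c : ℝ) (hc : 0 ≤ c) (W : ℕ → ℕ → ℝ)
    (hbase : ∀ m : ℕ, W 0 m ≤ c * m)
    (hzero : ∀ j : ℕ, W j 0 ≤ 0)
    (hrec : ∀ j m : ℕ, ∃ (s : ℕ) (ms : Fin s → ℕ),
      (∑ i, ms i) = m ∧ W (j + 1) m ≤ (∑ i, W j (ms i)) + c * m) :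
    ∀ j m : ℕ, W j m ≤ c * m * (j + 1) := by
  intro j
  induction j with
  | zero => intro m; simpa using hbase m
  | succ j ih =>
    intro m
    obtain ⟨s, ms, hsum, hW⟩ := hrec j m
    have h1 : (∑ i, W j (ms i)) ≤ ∑ i, c * (ms i) * (j + 1) := by
      exact Finset.sum_le_sum fun i _ => ih (ms i)
    have h2 : (∑ i, c * (ms i) * (j + 1)) = c * m * (j + 1) := by
      rw [← hsum]
      push_cast
      rw [Finset.mul_sum, Finset.sum_mul]
    calc W (j + 1) m ≤ (∑ i, W j (ms i)) + c * m := hW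
      _ ≤ c * m * (j + 1) + c * m := by linarith [h1, h2.le, h2.ge]
      _ = c * m * ((j:ℝ) + 1 + 1) := by ring
      _ = c * m * ((j + 1 : ℕ) + 1) := by push_cast; ring
end

section
/- Staircase dominant-max lemma: let P be a finite set of points, each point p having a key y_p ∈ ℕ (all keys distinct) and a score s_p ∈ ℝ. Say a point p covers a point q if y_p < y_q and s_p ≥ s_q; the staircase of P is the set of points of P not covered by any point of P. Then for every threshold t such that some point of P has key less than t: (i) the staircase of P contains a point with key less than t; and (ii) if p* is the point of the staircase of P with the largest key among staircase points with key less than t, then s_{p*} = max{ s_p : p ∈ P, y_p < t }. In particular, the dominant-max query with threshold t over P is answered by the score of the key-predecessor of t within the staircase of P. -/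
/-- A point `p = (key, score)` covers `q` if `p` has smaller key and at least as
large a score. -/
def Covers (p q : ℕ × ℝ) : Prop := p.1 < q.1 ∧ q.2 ≤ p.2

/-- The staircase of a finite set of points: those points of `P` not covered by
any point of `P`. -/
def Staircase (P : Finset (ℕ × ℝ)) : Set (ℕ × ℝ) :=
  {p | p ∈ P ∧ ∀ q ∈ P, ¬ Covers q p}

/-- Staircase dominant-max lemma: if the keys of `P` are pairwise distinct and
some point of `P` has key `< t`, then (i) the staircase of `P` contains a point
with key `< t`, and (ii) the staircase point `p*` with the largest key among
staircase points with key `< t` has score equal to the maximum score over all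
points of `P` with key `< t`. -/
theorem staircase_dominant_max (P : Finset (ℕ × ℝ))
    (hdist : ∀ p ∈ P, ∀ q ∈ P, p.1 = q.1 → p = q)
    (t : ℕ) (hne : ∃ p ∈ P, p.1 < t) :
    (∃ p ∈ Staircase P, p.1 < t) ∧
    (∀ pstar ∈ Staircase P, pstar.1 < t →
      (∀ q ∈ Staircase P, q.1 < t → q.1 ≤ pstar.1) →
      IsGreatest {s : ℝ | ∃ p ∈ P, p.1 < t ∧ p.2 = s} pstar.2) := by
  classical
  obtain ⟨p0, hp0P, hp0t⟩ := hne
  set S := P.filter (fun p => p.1 < t) with hS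
  have hSne : S.Nonempty := ⟨p0, Finset.mem_filter.2 ⟨hp0P, hp0t⟩⟩
  obtain ⟨m, hmS, hmax⟩ := S.exists_max_image (fun p => p.2) hSne
  set T := S.filter (fun p => p.2 = m.2) with hT
  have hTne : T.Nonempty := ⟨m, Finset.mem_filter.2 ⟨hmS, rfl⟩⟩
  obtain ⟨p, hpT, hpmin⟩ := T.exists_min_image (fun p => p.1) hTne
  have hpS : p ∈ S := (Finset.mem_filter.1 hpT).1
  have hpscore : p.2 = m.2 := (Finset.mem_filter.1 hpT).2
  have hpP : p ∈ P := (Finset.mem_filter.1 hpS).1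
  have hpt : p.1 < t := (Finset.mem_filter.1 hpS).2
  have hmaxscore : ∀ q ∈ P, q.1 < t → q.2 ≤ p.2 := by
    intro q hq hqt
    rw [hpscore]
    exact hmax q (Finset.mem_filter.2 ⟨hq, hqt⟩)
  have hpstair : p ∈ Staircase P := by
    refine ⟨hpP, fun q hq hcov => ?_⟩
    have hq1 : q.1 < p.1 := hcov.1
    have hqt : q.1 < t := hq1.trans hpt
    have hq2 : q.2 = p.2 := le_antisymm (hmaxscore q hq hqt) hcov.2
    have hqT : q ∈ T :=
      Finset.mem_filter.2 ⟨Finset.mem_filter.2 ⟨hq, hqt⟩, hq2.trans hpscore⟩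
    exact absurd (hpmin q hqT) (not_le.2 hq1)
  refine ⟨⟨p, hpstair, hpt⟩, ?_⟩
  intro pstar hstar hstart hkeymax
  have hstarP : pstar ∈ P := hstar.1
  have hkey : p.1 ≤ pstar.1 := hkeymax p hpstair hpt
  have hpe : p = pstar := by
    rcases lt_or_eq_of_le hkey with h | h
    · exact absurd ⟨h, hmaxscore pstar hstarP hstart⟩ (hstar.2 p hpP)
    · exact hdist p hpP pstar hstarP h
  constructor
  · exact ⟨pstar, hstarP, hstart, rfl⟩
  · rintro s ⟨q, hq, hqt, rfl⟩
    rw [← hpe]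
    exact hmaxscore q hq hqt
end
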